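/- arXiv:1309.1068 — 2 statements merged into one kernel-verified Lean document; each statement's English description precedes it below -/
import Mathlib

section
/- For every positive natural number k, (-F_{2k} + √(5·F_{2k}² + 4)) / 2 = F_{2k-1}. Equivalently, setting ħ := 1/F_{2k}, the value λ := 2ħ/(-1 + √(5 + 4ħ²)) satisfies λ = 1/F_{2k-1}. -/
/-! Cassini's identity at the even index `2k`, rewritten with `F_{2k+1} = F_{2k} + F_{2k-1}`, gives
`F_{2k-1}² + F_{2k-1} F_{2k} - F_{2k}² = 1`, i.e. `5 F_{2k}² + 4 = (2 F_{2k-1} + F_{2k})²`.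
Hence `√(5 F_{2k}² + 4) = 2 F_{2k-1} + F_{2k}`, and both identities become rational arithmetic. -/

theorem Nat.fib_pred_sq_add_fib_pred_mul_fib_sub_fib_sq {n : ℕ} (hn : 0 < n) :
    (fib (n - 1) : ℤ) ^ 2 + fib (n - 1) * fib n - (fib n : ℤ) ^ 2 = (-1) ^ n := by
  obtain ⟨m, rfl⟩ : ∃ m, n = m + 1 := ⟨n - 1, by omega⟩
  have cassini := Int.fib_succ_mul_fib_pred_sub_fib_sq (m + 1 : ℕ)
  rw [show ((m + 1 : ℕ) : ℤ) + 1 = (m + 2 : ℕ) by omega, show ((m + 1 : ℕ) : ℤ) - 1 = m by omega,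
    Int.natAbs_natCast] at cassini
  simp only [Int.fib_natCast, Nat.fib_add_two, Nat.add_sub_cancel] at cassini ⊢
  push_cast at cassini
  linear_combination cassini

theorem Real.sqrt_five_mul_sq_add_four {a b : ℝ} (ha : 0 ≤ a) (hb : 0 ≤ b)
    (h : a ^ 2 + a * b - b ^ 2 = 1) : √(5 * b ^ 2 + 4) = 2 * a + b := by
  rw [show 5 * b ^ 2 + 4 = (2 * a + b) ^ 2 by linear_combination (-4) * h]
  exact Real.sqrt_sq (by positivity)

theorem two_div_neg_one_add_sqrt_five_add_four_inv_sq {a b : ℝ} (ha : 0 < a) (hb : 0 < b)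
    (h : √(5 * b ^ 2 + 4) = 2 * a + b) :
    2 * (1 / b) / (-1 + √(5 + 4 * (1 / b) ^ 2)) = 1 / a := by
  have hsqrt : √(5 + 4 * (1 / b) ^ 2) = (2 * a + b) / b := by
    rw [show 5 + 4 * (1 / b) ^ 2 = (5 * b ^ 2 + 4) / b ^ 2 by field_simp,
      Real.sqrt_div' _ (by positivity), Real.sqrt_sq hb.le, h]
  rw [hsqrt]
  field_simp
  ring

/-- For `k ≥ 1`, `(-F_{2k} + √(5F_{2k}² + 4))/2 = F_{2k-1}`; equivalently, at
`ħ = 1/F_{2k}` the value `λ = 2ħ/(-1 + √(5 + 4ħ²))` equals `1/F_{2k-1}`. -/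
theorem bohr_sommerfeld_fib (k : ℕ) (hk : 0 < k) :
    (-(Nat.fib (2 * k) : ℝ) + Real.sqrt (5 * (Nat.fib (2 * k) : ℝ) ^ 2 + 4)) / 2
      = (Nat.fib (2 * k - 1) : ℝ) ∧
    (∀ hbar : ℝ, hbar = 1 / (Nat.fib (2 * k) : ℝ) →
      2 * hbar / (-1 + Real.sqrt (5 + 4 * hbar ^ 2))
        = 1 / (Nat.fib (2 * k - 1) : ℝ)) := by
  have hcassini : (Nat.fib (2 * k - 1) : ℝ) ^ 2 + Nat.fib (2 * k - 1) * Nat.fib (2 * k)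
      - (Nat.fib (2 * k) : ℝ) ^ 2 = 1 := by
    have := Nat.fib_pred_sq_add_fib_pred_mul_fib_sub_fib_sq (n := 2 * k) (by omega)
    rw [pow_mul, neg_one_sq, one_pow] at this
    exact_mod_cast this
  have hsqrt := Real.sqrt_five_mul_sq_add_four (Nat.cast_nonneg _) (Nat.cast_nonneg _) hcassini
  refine ⟨by rw [hsqrt]; ring, fun hbar hhbar => hhbar ▸ ?_⟩
  exact two_div_neg_one_add_sqrt_five_add_four_inv_sq
    (by exact_mod_cast Nat.fib_pos.mpr (by omega)) (by exact_mod_cast Nat.fib_pos.mpr (by omega))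
    hsqrt
end

section
/- Let n and m be positive integers satisfying m² + m·n - n² = 1. Then there exists a positive natural number k such that n = F_{2k} and m = F_{2k-1}. -/
private lemma fib_pell_aux : ∀ N : ℕ, ∀ n m : ℤ, n.toNat = N → 0 < n → 0 < m →
    (m ^ 2 + m * n - n ^ 2 = 1 →
      ∃ k : ℕ, 0 < k ∧ n = (Nat.fib (2 * k) : ℤ) ∧ m = (Nat.fib (2 * k - 1) : ℤ)) ∧
    (m ^ 2 + m * n - n ^ 2 = -1 →
      ∃ k : ℕ, 0 < k ∧ n = (Nat.fib (2 * k + 1) : ℤ) ∧ m = (Nat.fib (2 * k) : ℤ)) := by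
  intro N
  induction N using Nat.strong_induction_on with
  | _ N IH =>
    intro n m hN hn hm
    rcases le_or_gt n m with hle | hlt
    · constructor
      · intro h
        -- m² + n(m-n) = 1 with m ≥ n ≥ 1 forces m = n = 1
        have hm1 : m = 1 := by nlinarith
        have hn1 : n = 1 := by nlinarith
        exact ⟨1, by norm_num [hm1, hn1]⟩
      · intro h
        exfalso; nlinarith
    · -- descent: (m, n - m) is a solution with opposite sign
      have hnm : 0 < n - m := by omega
      have hN' : (m.toNat : ℤ) = m := Int.toNat_of_nonneg hm.le
      have hlt' : m.toNat < N := by omega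
      obtain ⟨H1, H2⟩ := IH m.toNat hlt' m (n - m) rfl hm hnm
      constructor
      · intro h
        obtain ⟨k, hk, h1, h2⟩ := H2 (by nlinarith)
        refine ⟨k + 1, by omega, ?_, ?_⟩
        · have : 2 * (k + 1) = 2 * k + 2 := by ring
          rw [this, Nat.fib_add_two]
          push_cast
          omega
        · have : 2 * (k + 1) - 1 = 2 * k + 1 := by omega
          rw [this]; exact h1
      · intro h
        obtain ⟨k, hk, h1, h2⟩ := H1 (by nlinarith)
        refine ⟨k, hk, ?_, h1⟩
        have : 2 * k + 1 = (2 * k - 1) + 2 := by omega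
        rw [this, Nat.fib_add_two]
        have : 2 * k - 1 + 1 = 2 * k := by omega
        rw [this]
        push_cast
        omega

/-- Positive integer solutions of `m² + mn - n² = 1` are exactly the
consecutive Fibonacci pairs `(n, m) = (F_{2k}, F_{2k-1})`. -/
theorem fib_pell_characterization (n m : ℤ) (hn : 0 < n) (hm : 0 < m)
    (h : m ^ 2 + m * n - n ^ 2 = 1) :
    ∃ k : ℕ, 0 < k ∧ n = (Nat.fib (2 * k) : ℤ) ∧ m = (Nat.fib (2 * k - 1) : ℤ) := by
  exact (fib_pell_aux n.toNat n m rfl hn hm).1 h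
end
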